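/- For integers m ≥ 2, s ≥ 1, t ≥ 1, consider the Cameron–Walker graph G^{(2)}_{m,s,t} with p = 2, s_1 = ... = s_{m−1} = 1, s_m = s, t_1 = t, t_2 = 0, and bipartite edges {v_1,w_1}, {v_1,w_2}, {v_2,w_2}, ..., {v_m,w_2}. Then |V(G)| = 2m + s + 2t + 1, the independence number of G is m + s + t, and i(G) = m + 1. -/

import Mathlib

/-!
The vertices of a Cameron–Walker graph split into cliques: at each `vᵢ` the edge to its first
leaf and its other leaves as singletons; at each `w_j` the first pendant triangle (or `w_j`
alone) and the other triangles minus `w_j`. An independent set meets each clique at most once,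
so `α(G) ≤ ∑ max 1 sᵢ + ∑ max 1 t_j`, and all leaves, one vertex of each triangle and the bare
`w_j` attain this. Dually, the closed neighbourhoods of the first leaf at each `vᵢ` and of a
vertex of the first triangle at each `w_j` lie in distinct cliques, and each must meet a
dominating set; here this gives `i(G) ≥ m + 1`, attained by `{v₂, …, vₘ, w₁}` and the leaf
at `v₁`.
-/

/-- A finite set of vertices is independent in `G` if no two of its members are adjacent. -/
def SimpleGraph.IsIndepFinset {V : Type*} (G : SimpleGraph V) (A : Finset V) : Prop :=
  ∀ u ∈ A, ∀ v ∈ A, ¬ G.Adj u v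

/-- `A` is an independent dominating set of `G`: `A` is independent and
`A ∪ N_G(A) = V(G)`, i.e. every vertex is in `A` or adjacent to a member of `A`. -/
def SimpleGraph.IsIndepDomFinset {V : Type*} (G : SimpleGraph V) (A : Finset V) : Prop :=
  G.IsIndepFinset A ∧ ∀ v : V, v ∈ A ∨ ∃ u ∈ A, G.Adj u v

/-- The vertex set of a Cameron–Walker graph in standard form:
the `vᵢ` (`i : Fin m`), the `w_j` (`j : Fin p`), the `sᵢ` leaves attached to `vᵢ`,
and the two extra vertices of each of the `t_j` pendant triangles attached to `w_j`. -/
abbrev CWVert (m p : ℕ) (s : Fin m → ℕ) (t : Fin p → ℕ) : Type :=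
  (Fin m) ⊕ (Fin p) ⊕ (Σ i : Fin m, Fin (s i)) ⊕ (Σ j : Fin p, Fin (t j) × Fin 2)

/-- The Cameron–Walker graph in standard form: a bipartite graph between the `vᵢ`
and the `w_j` with edge relation `E`, together with `sᵢ` pendant leaves at each `vᵢ`
and `t_j` pendant triangles at each `w_j`. -/
def CWGraph (m p : ℕ) (E : Fin m → Fin p → Prop) (s : Fin m → ℕ) (t : Fin p → ℕ) :
    SimpleGraph (CWVert m p s t) :=
  SimpleGraph.fromRel (fun u v =>
    match u, v with
    | Sum.inl i, Sum.inr (Sum.inl j) => E i j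
    | Sum.inl i, Sum.inr (Sum.inr (Sum.inl ⟨i', _⟩)) => i = i'
    | Sum.inr (Sum.inl j), Sum.inr (Sum.inr (Sum.inr ⟨j', _⟩)) => j = j'
    | Sum.inr (Sum.inr (Sum.inr ⟨j, l, _⟩)), Sum.inr (Sum.inr (Sum.inr ⟨j', l', _⟩)) =>
        j = j' ∧ HEq l l'
    | _, _ => False)

/-- The bipartite part of the Cameron–Walker graph, as a graph on `{v₁,…,vₘ} ∪ {w₁,…,w_p}`. -/
def CWBip (m p : ℕ) (E : Fin m → Fin p → Prop) : SimpleGraph ((Fin m) ⊕ (Fin p)) :=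
  SimpleGraph.fromRel (fun u v =>
    match u, v with
    | Sum.inl i, Sum.inr j => E i j
    | _, _ => False)

namespace SimpleGraph

variable {V : Type*} {G : SimpleGraph V} {A : Finset V}

theorem IsIndepFinset.card_le_of_isClique_fibers {ι : Type*} [Fintype ι]
    (hA : G.IsIndepFinset A) (c : V → ι) (hc : ∀ x y, c x = c y → x ≠ y → G.Adj x y) :
    A.card ≤ Fintype.card ι := by
  rw [← Finset.card_univ]
  refine Finset.card_le_card_of_injOn c (fun _ _ => Finset.mem_univ _) fun x hx y hy hxy => ?_
  by_contra hne
  exact hA x hx y hy (hc x y hxy hne)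

theorem card_le_card_of_dominating {κ ι : Type*} [Fintype κ]
    (hA : ∀ v, v ∈ A ∨ ∃ u ∈ A, G.Adj u v) (f : κ → V) (c : V → ι)
    (hcf : Function.Injective (c ∘ f)) (hc : ∀ k u, G.Adj u (f k) → c u = c (f k)) :
    Fintype.card κ ≤ A.card := by
  have hcover : ∀ k, ∃ u ∈ A, c u = c (f k) := fun k =>
    (hA (f k)).elim (fun h => ⟨f k, h, rfl⟩) fun ⟨u, hu, hadj⟩ => ⟨u, hu, hc k u hadj⟩
  choose g hgA hgc using hcover
  rw [← Finset.card_univ]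
  refine Finset.card_le_card_of_injOn g (fun k _ => hgA k) fun k _ k' _ h => hcf ?_
  simp only [Function.comp, ← hgc, h]

end SimpleGraph

namespace CWGraph

section General

variable {m p : ℕ} {E : Fin m → Fin p → Prop} {s : Fin m → ℕ} {t : Fin p → ℕ}

def cliqueIndex : CWVert m p s t →
    (Σ i : Fin m, Fin (max 1 (s i))) ⊕ (Σ j : Fin p, Fin (max 1 (t j)))
  | .inl i => .inl ⟨i, 0, by omega⟩
  | .inr (.inl j) => .inr ⟨j, 0, by omega⟩
  | .inr (.inr (.inl ⟨i, k⟩)) => .inl ⟨i, k, by omega⟩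
  | .inr (.inr (.inr ⟨j, l, _⟩)) => .inr ⟨j, l, by omega⟩

theorem adj_of_cliqueIndex_eq (x y : CWVert m p s t) (h : cliqueIndex x = cliqueIndex y)
    (hne : x ≠ y) : (CWGraph m p E s t).Adj x y := by
  rcases x with i | j | ⟨i, k⟩ | ⟨j, l, a⟩ <;>
    rcases y with i' | j' | ⟨i', k'⟩ | ⟨j', l', a'⟩ <;>
    simp only [cliqueIndex, CWGraph, SimpleGraph.fromRel_adj, ne_eq, Sum.inl.injEq, Sum.inr.injEq,
      Sigma.mk.injEq, reduceCtorEq, not_and, or_self, and_false, or_false, false_or, true_and,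
      not_false_eq_true] at h hne ⊢
  all_goals obtain ⟨rfl, h⟩ := h; simp_all [Fin.ext_iff]

theorem card_le_of_isIndepFinset {A : Finset (CWVert m p s t)}
    (hA : (CWGraph m p E s t).IsIndepFinset A) :
    A.card ≤ ∑ i, max 1 (s i) + ∑ j, max 1 (t j) := by
  simpa [Fintype.card_sigma] using hA.card_le_of_isClique_fibers cliqueIndex adj_of_cliqueIndex_eq

def pendantRep : {i // 0 < s i} ⊕ {j // 0 < t j} → CWVert m p s t
  | .inl i => .inr (.inr (.inl ⟨i, 0, i.2⟩))
  | .inr j => .inr (.inr (.inr ⟨j, ⟨0, j.2⟩, 0⟩))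

theorem injective_cliqueIndex_comp_pendantRep :
    Function.Injective (cliqueIndex ∘ pendantRep : {i // 0 < s i} ⊕ {j // 0 < t j} → _) := by
  rintro (i | j) (i' | j') h <;> simp_all [pendantRep, cliqueIndex, Subtype.ext_iff]

theorem cliqueIndex_eq_of_adj_pendantRep (k : {i // 0 < s i} ⊕ {j // 0 < t j})
    (u : CWVert m p s t) (h : (CWGraph m p E s t).Adj u (pendantRep k)) :
    cliqueIndex u = cliqueIndex (pendantRep k) := by
  rcases k with ⟨i, hi⟩ | ⟨j, hj⟩ <;>
    rcases u with i' | j' | ⟨i', k'⟩ | ⟨j', l', a'⟩ <;>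
    simp only [pendantRep, CWGraph, SimpleGraph.fromRel_adj, ne_eq, Sum.inl.injEq, Sum.inr.injEq,
      Sigma.mk.injEq, reduceCtorEq, not_and, or_self, and_false, or_false, true_and,
      not_false_eq_true] at h
  · subst h; rfl
  · subst h; rfl
  · obtain ⟨-, ⟨rfl, h⟩ | ⟨rfl, h⟩⟩ := h <;> cases h <;> rfl

theorem card_add_card_le_card_of_dominating {A : Finset (CWVert m p s t)}
    (hA : ∀ v, v ∈ A ∨ ∃ u ∈ A, (CWGraph m p E s t).Adj u v) :
    Fintype.card {i // 0 < s i} + Fintype.card {j // 0 < t j} ≤ A.card := by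
  simpa using SimpleGraph.card_le_card_of_dominating hA pendantRep cliqueIndex
    injective_cliqueIndex_comp_pendantRep cliqueIndex_eq_of_adj_pendantRep

theorem card_vert : Fintype.card (CWVert m p s t) = m + p + ∑ i, s i + 2 * ∑ j, t j := by
  simp only [Fintype.card_sum, Fintype.card_fin, Fintype.card_sigma, Fintype.card_prod,
    ← Finset.sum_mul]
  ring

theorem sum_max_one_eq_card_add_sum (t : Fin p → ℕ) :
    ∑ j, max 1 (t j) = Fintype.card {j // t j = 0} + ∑ j, t j := by
  rw [Fintype.card_subtype, Finset.card_filter, ← Finset.sum_add_distrib]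
  refine Finset.sum_congr rfl fun j _ => ?_
  split <;> omega

def maxIndepVertex : (Σ i, Fin (s i)) ⊕ {j // t j = 0} ⊕ (Σ j, Fin (t j)) → CWVert m p s t
  | .inl ⟨i, k⟩ => .inr (.inr (.inl ⟨i, k⟩))
  | .inr (.inl j) => .inr (.inl j)
  | .inr (.inr ⟨j, l⟩) => .inr (.inr (.inr ⟨j, l, 0⟩))

theorem maxIndepVertex_injective : Function.Injective (maxIndepVertex (s := s) (t := t)) := by
  rintro (⟨i, k⟩ | j | ⟨j, l⟩) (⟨i', k'⟩ | j' | ⟨j', l'⟩) h <;>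
    simp_all only [maxIndepVertex, Sum.inl.injEq, Sum.inr.injEq, Sigma.mk.injEq, Subtype.ext_iff,
      reduceCtorEq, true_and, and_self]
  obtain ⟨rfl, h⟩ := h
  simpa using h

theorem isIndepFinset_image_maxIndepVertex :
    (CWGraph m p E s t).IsIndepFinset (Finset.univ.image maxIndepVertex) := by
  simp only [SimpleGraph.IsIndepFinset, Finset.mem_image, Finset.mem_univ, true_and]
  rintro _ ⟨(⟨i, k⟩ | ⟨j, hj⟩ | ⟨j, l⟩), rfl⟩ _
    ⟨(⟨i', k'⟩ | ⟨j', hj'⟩ | ⟨j', l'⟩), rfl⟩ <;>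
    simp only [maxIndepVertex, CWGraph, SimpleGraph.fromRel_adj, ne_eq, Sum.inl.injEq,
      Sum.inr.injEq, Sigma.mk.injEq, reduceCtorEq, not_and, not_or, or_self, and_false, or_false,
      false_or, true_and, not_false_eq_true]
  · rintro rfl
    exact (Fin.cast hj l').elim0
  · rintro rfl
    exact (Fin.cast hj' l).elim0
  · intro hne
    constructor <;> rintro rfl h <;> exact hne rfl (by rw [eq_of_heq h])

theorem isGreatest_card_isIndepFinset (hs : ∀ i, 0 < s i) :
    IsGreatest
      {k | ∃ A : Finset (CWVert m p s t), (CWGraph m p E s t).IsIndepFinset A ∧ A.card = k}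
      (∑ i, s i + ∑ j, max 1 (t j)) := by
  refine ⟨⟨_, isIndepFinset_image_maxIndepVertex, ?_⟩, ?_⟩
  · rw [Finset.card_image_of_injective _ maxIndepVertex_injective, sum_max_one_eq_card_add_sum]
    simp [Fintype.card_sigma]
  · rintro _ ⟨A, hA, rfl⟩
    have hmax : ∑ i, max 1 (s i) = ∑ i, s i :=
      Finset.sum_congr rfl fun i _ => max_eq_right (hs i)
    exact hmax ▸ card_le_of_isIndepFinset hA

end General

section Example

variable {m s t : ℕ}

abbrev leafCount (m s : ℕ) : Fin m → ℕ := fun i => if (i : ℕ) = m - 1 then s else 1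

abbrev triangleCount (t : ℕ) : Fin 2 → ℕ := fun j => if j = 0 then t else 0

abbrev pathEdges (m : ℕ) : Fin m → Fin 2 → Prop :=
  fun i j => ((i : ℕ) = 0 ∧ j = 0) ∨ j = 1

theorem sum_leafCount (hm : 1 ≤ m) : ∑ i, leafCount m s i = m - 1 + s := by
  obtain ⟨n, rfl⟩ : ∃ n, m = n + 1 := ⟨m - 1, by omega⟩
  simp [leafCount, Fin.sum_univ_castSucc, (Fin.is_lt _).ne]

theorem leafCount_pos (hs : 0 < s) (i : Fin m) : 0 < leafCount m s i := by
  unfold leafCount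
  split <;> omega

theorem card_pos_leafCount (hs : 0 < s) : Fintype.card {i // 0 < leafCount m s i} = m := by
  rw [Fintype.card_subtype, Finset.filter_true_of_mem fun i _ => leafCount_pos hs i,
    Finset.card_univ, Fintype.card_fin]

theorem card_pos_triangleCount (ht : 0 < t) : Fintype.card {j // 0 < triangleCount t j} = 1 := by
  rw [Fintype.card_subtype, Finset.card_filter, Fin.sum_univ_two]
  simp [triangleCount, ht]

theorem sum_triangleCount : ∑ j, triangleCount t j = t := by
  simp [triangleCount]

theorem sum_max_one_triangleCount (ht : 0 < t) : ∑ j, max 1 (triangleCount t j) = t + 1 := by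
  simp only [triangleCount, Fin.sum_univ_two, Fin.isValue, ↓reduceIte, one_ne_zero]
  omega

attribute [local simp] CWGraph SimpleGraph.fromRel_adj pathEdges leafCount

-- `w₁`, the leaf at `v₁`, and `v₂, …, vₘ` (indices are 0-based).
def minIndepDomSet (n s t : ℕ) :
    Finset (CWVert (n + 2) 2 (leafCount (n + 2) s) (triangleCount t)) :=
  insert (.inr (.inl 0)) <| insert (.inr (.inr (.inl ⟨0, 0, by simp⟩))) <|
    (Finset.univ.erase 0).map ⟨Sum.inl, Sum.inl_injective⟩

theorem card_minIndepDomSet (n s t : ℕ) : (minIndepDomSet n s t).card = n + 3 := by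
  simp [minIndepDomSet, Finset.card_insert_of_notMem]

theorem isIndepDomFinset_minIndepDomSet (n s t : ℕ) :
    (CWGraph (n + 2) 2 (pathEdges (n + 2)) (leafCount (n + 2) s)
      (triangleCount t)).IsIndepDomFinset (minIndepDomSet n s t) := by
  constructor
  · simp only [SimpleGraph.IsIndepFinset, minIndepDomSet, Finset.mem_insert, Finset.mem_map,
      Finset.mem_erase, Finset.mem_univ, and_true]
    rintro u (rfl | rfl | ⟨i, hi, rfl⟩) v (rfl | rfl | ⟨i', hi', rfl⟩) <;> simp [*]
  · rintro (i | j | ⟨i, k⟩ | ⟨j, l, a⟩)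
    · by_cases hi : i = 0
      · subst hi
        exact .inr ⟨.inr (.inl 0), by simp [minIndepDomSet], by simp⟩
      · exact .inl (by simp [minIndepDomSet, hi])
    · fin_cases j
      · exact .inl (by simp [minIndepDomSet])
      · exact .inr ⟨.inl 1, by simp [minIndepDomSet], by simp⟩
    · by_cases hi : i = 0
      · subst hi
        obtain rfl : k = ⟨0, by simp⟩ := Fin.ext (Nat.lt_one_iff.mp (by simpa using k.2))
        exact .inl (by simp [minIndepDomSet])
      · exact .inr ⟨.inl i, by simp [minIndepDomSet, hi], by simp⟩
    · fin_cases j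
      · exact .inr ⟨.inr (.inl 0), by simp [minIndepDomSet], by simp⟩
      · exact l.elim0

end Example

end CWGraph

/-- the Cameron–Walker graph `G⁽²⁾_{m,s,t}` (with `p = 2`, one leaf at
each of `v₁,…,v_{m−1}`, `s` leaves at `vₘ`, `t` pendant triangles at `w₁`, none at
`w₂`, and bipartite edges `{v₁,w₁}, {v₁,w₂}, {v₂,w₂}, …, {vₘ,w₂}`) has
`2m + s + 2t + 1` vertices, independence number `m + s + t`, and `i(G) = m + 1`. -/
theorem stmt_19 (m s t : ℕ) (hm : 2 ≤ m) (hs : 1 ≤ s) (ht : 1 ≤ t) :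
    Fintype.card (CWVert m 2 (fun i => if (i : ℕ) = m - 1 then s else 1)
        (fun j => if j = 0 then t else 0)) = 2 * m + s + 2 * t + 1 ∧
    IsGreatest {k : ℕ | ∃ A : Finset (CWVert m 2
          (fun i => if (i : ℕ) = m - 1 then s else 1) (fun j => if j = 0 then t else 0)),
        (CWGraph m 2 (fun i j => ((i : ℕ) = 0 ∧ j = 0) ∨ j = 1)
          (fun i => if (i : ℕ) = m - 1 then s else 1)
          (fun j => if j = 0 then t else 0)).IsIndepFinset A ∧ A.card = k}
      (m + s + t) ∧
    IsLeast {k : ℕ | ∃ A : Finset (CWVert m 2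
          (fun i => if (i : ℕ) = m - 1 then s else 1) (fun j => if j = 0 then t else 0)),
        (CWGraph m 2 (fun i j => ((i : ℕ) = 0 ∧ j = 0) ∨ j = 1)
          (fun i => if (i : ℕ) = m - 1 then s else 1)
          (fun j => if j = 0 then t else 0)).IsIndepDomFinset A ∧ A.card = k}
      (m + 1) := by
  open CWGraph in
  obtain ⟨n, rfl⟩ : ∃ n, m = n + 2 := ⟨m - 2, by omega⟩
  refine ⟨?_, ?_, ?_⟩
  · rw [card_vert, sum_leafCount (by omega), sum_triangleCount]
    omega
  · convert isGreatest_card_isIndepFinset (E := pathEdges (n + 2)) (t := triangleCount t)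
      (leafCount_pos hs) using 1
    rw [sum_leafCount (by omega), sum_max_one_triangleCount ht]
    omega
  · refine ⟨⟨_, isIndepDomFinset_minIndepDomSet n s t, card_minIndepDomSet n s t⟩, ?_⟩
    rintro _ ⟨A, hA, rfl⟩
    have hA_card := card_add_card_le_card_of_dominating hA.2
    rwa [card_pos_leafCount hs, card_pos_triangleCount ht] at hA_card
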